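/- arXiv:2312.00601 — 5 statements merged into one kernel-verified Lean document; each statement's English description precedes it below -/
import Mathlib

section
/- Let G be a finite simple graph whose greedy coloring under linear order π uses exactly x ≥ 2 distinct colors. Then there exist an integer q with 0 ≤ q ≤ x - 2 and a subset V' ⊆ V(G) with |V'| = x + q such that V' can be partitioned into q + 1 pairwise disjoint subsets, each of which has cardinality at least 2 and induces a clique in G. -/
/-!
By induction on the colour of `v`, there is a family `P` of disjoint cliques of size at least 2,
all of whose vertices are `≤ v`, covering exactly `c v + |P|` vertices. For `c v = m + 1`, start
from the family of an earlier neighbour of colour `m`; `v` has at least `m + 1` earlier neighbours.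
If one of them is not covered, it forms a new clique with `v`. Otherwise fewer than `|P|` covered
vertices are not earlier neighbours of `v`, so some clique of `P` consists of such neighbours and
`v` joins it. Applied to a vertex of the top colour `x - 1`, this gives `|P| ≤ x - 1` because
every clique has at least two vertices.
-/

/-- `c` is the greedy (FirstFit) coloring of `G` under the linear order on `V`. -/
def IsGreedyColoring {V : Type*} [LinearOrder V] (G : SimpleGraph V) (c : V → ℕ) : Prop :=
  ∀ v : V, IsLeast {n : ℕ | ∀ u : V, G.Adj v u → u < v → c u ≠ n} (c v)

open Finset

namespace SimpleGraph

variable {V : Type*} (G : SimpleGraph V)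

structure IsCliquePacking (P : Finset (Finset V)) : Prop where
  pairwiseDisjoint : (P : Set (Finset V)).PairwiseDisjoint id
  two_le_card : ∀ K ∈ P, 2 ≤ #K
  isClique : ∀ K ∈ P, G.IsClique (K : Set V)

namespace IsCliquePacking

variable {G} {P : Finset (Finset V)}

theorem mono (hP : G.IsCliquePacking P) {Q : Finset (Finset V)} (hQP : Q ⊆ P) :
    G.IsCliquePacking Q where
  pairwiseDisjoint := hP.pairwiseDisjoint.subset (coe_subset.2 hQP)
  two_le_card K hK := hP.two_le_card K (hQP hK)
  isClique K hK := hP.isClique K (hQP hK)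

protected theorem insert [DecidableEq V] (hP : G.IsCliquePacking P) {K : Finset V} (hK₂ : 2 ≤ #K)
    (hK : G.IsClique (K : Set V)) (hdisj : ∀ K' ∈ P, Disjoint K K') :
    G.IsCliquePacking (insert K P) where
  pairwiseDisjoint := by
    rw [coe_insert]
    exact hP.pairwiseDisjoint.insert fun K' hK' _ ↦ hdisj K' hK'
  two_le_card := (forall_mem_insert _ _ _).2 ⟨hK₂, hP.two_le_card⟩
  isClique := (forall_mem_insert _ _ _).2 ⟨hK, hP.isClique⟩

variable [DecidableEq V]

theorem two_mul_card_le (hP : G.IsCliquePacking P) : 2 * #P ≤ #(P.biUnion id) := by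
  rw [card_biUnion hP.pairwiseDisjoint, mul_comm, ← smul_eq_mul, ← sum_const]
  exact sum_le_sum hP.two_le_card

theorem exists_subset_of_card_sdiff_lt (hP : G.IsCliquePacking P) {N : Finset V}
    (h : #(P.biUnion id \ N) < #P) : ∃ K ∈ P, K ⊆ N := by
  by_contra! hN
  have hsub : P.biUnion (· \ N) ⊆ P.biUnion id \ N :=
    biUnion_subset.2 fun K hK ↦ sdiff_subset_sdiff (subset_biUnion_of_mem id hK) le_rfl
  have hdisj : (P : Set (Finset V)).PairwiseDisjoint (· \ N) :=
    hP.pairwiseDisjoint.mono fun K ↦ sdiff_subset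
  have := card_le_card_biUnion hdisj fun K hK ↦ sdiff_nonempty.2 (hN K hK)
  exact h.not_ge (this.trans (card_le_card hsub))

theorem exists_add_pair {m : ℕ} (hP : G.IsCliquePacking P) (hU : #(P.biUnion id) = m + #P)
    {v y : V} (hvy : G.Adj v y) (hv : v ∉ P.biUnion id) (hy : y ∉ P.biUnion id) :
    ∃ P', G.IsCliquePacking P' ∧ P'.biUnion id = insert v (insert y (P.biUnion id)) ∧
      #(P'.biUnion id) = m + 1 + #P' := by
  have hdisj : ∀ K ∈ P, Disjoint {v, y} K := fun K hK ↦ by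
    have hKU := subset_biUnion_of_mem id hK
    simp only [disjoint_insert_left, disjoint_singleton_left]
    exact ⟨fun h ↦ hv (hKU h), fun h ↦ hy (hKU h)⟩
  have hnotMem : {v, y} ∉ P := fun h ↦ by simpa using hdisj _ h
  have hvy' : v ∉ insert y (P.biUnion id) := by simpa [hvy.ne] using hv
  have hunion : (insert {v, y} P).biUnion id = insert v (insert y (P.biUnion id)) := by simp
  have hclique : G.IsClique ({v, y} : Finset V) := by
    rw [coe_pair]
    exact isClique_pair.2 fun _ ↦ hvy
  refine ⟨insert {v, y} P, hP.insert (card_pair hvy.ne).ge hclique hdisj, hunion, ?_⟩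
  rw [hunion, card_insert_of_notMem hvy', card_insert_of_notMem hy,
    card_insert_of_notMem hnotMem, hU]
  ring

theorem exists_add_to_clique {m : ℕ} (hP : G.IsCliquePacking P)
    (hU : #(P.biUnion id) = m + #P) {v : V} {K : Finset V} (hK : K ∈ P)
    (hvK : ∀ w ∈ K, G.Adj v w) (hv : v ∉ P.biUnion id) :
    ∃ P', G.IsCliquePacking P' ∧ P'.biUnion id = insert v (P.biUnion id) ∧
      #(P'.biUnion id) = m + 1 + #P' := by
  have hdisj : ∀ K' ∈ P.erase K, Disjoint (insert v K) K' := fun K' hK' ↦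
    disjoint_insert_left.2 ⟨fun h ↦ hv (subset_biUnion_of_mem id (mem_of_mem_erase hK') h),
      hP.pairwiseDisjoint hK (mem_of_mem_erase hK') (ne_of_mem_erase hK').symm⟩
  have hnotMem : insert v K ∉ P.erase K := fun h ↦
    hv (subset_biUnion_of_mem id (mem_of_mem_erase h) (mem_insert_self v K))
  have hunion : (insert (insert v K) (P.erase K)).biUnion id = insert v (P.biUnion id) := by
    conv_rhs => rw [← insert_erase hK]
    simp only [biUnion_insert, id, insert_union]
  have hclique : G.IsClique (insert v K : Finset V) := by
    rw [coe_insert]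
    exact (hP.isClique K hK).insert fun w hw _ ↦ hvK w hw
  have hcard : 2 ≤ #(insert v K) := (hP.two_le_card K hK).trans (card_le_card (subset_insert v K))
  refine ⟨insert (insert v K) (P.erase K),
    (hP.mono (erase_subset K P)).insert hcard hclique hdisj, hunion, ?_⟩
  rw [hunion, card_insert_of_notMem hv, card_insert_of_notMem hnotMem,
    card_erase_add_one hK, hU, add_right_comm]

theorem exists_extend_of_lt_card {m : ℕ} (hP : G.IsCliquePacking P)
    (hU : #(P.biUnion id) = m + #P) {v : V} (hv : v ∉ P.biUnion id) {N : Finset V}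
    (hN : ∀ y ∈ N, G.Adj v y) (hm : m < #N) :
    ∃ P', G.IsCliquePacking P' ∧ P'.biUnion id ⊆ insert v (P.biUnion id ∪ N) ∧
      #(P'.biUnion id) = m + 1 + #P' := by
  by_cases hNU : N ⊆ P.biUnion id
  · have hlt : #(P.biUnion id \ N) < #P := by
      rw [card_sdiff_of_subset hNU]
      have := card_le_card hNU
      omega
    obtain ⟨K, hK, hKN⟩ := hP.exists_subset_of_card_sdiff_lt hlt
    obtain ⟨P', hP', hunion, hcard⟩ :=
      hP.exists_add_to_clique hU hK (fun w hw ↦ hN w (hKN hw)) hv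
    exact ⟨P', hP', hunion ▸ insert_subset_insert v subset_union_left, hcard⟩
  · obtain ⟨y, hyN, hyU⟩ := not_subset.1 hNU
    obtain ⟨P', hP', hunion, hcard⟩ := hP.exists_add_pair hU (hN y hyN) hv hyU
    refine ⟨P', hP', hunion ▸ insert_subset_insert v (insert_subset ?_ subset_union_left), hcard⟩
    exact mem_union_right _ hyN

end IsCliquePacking

end SimpleGraph

namespace IsGreedyColoring

variable {V : Type*} [LinearOrder V] {G : SimpleGraph V} {c : V → ℕ}

theorem exists_adj_lt (h : IsGreedyColoring G c) {v : V} {k : ℕ} (hk : k < c v) :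
    ∃ u, G.Adj v u ∧ u < v ∧ c u = k := by
  by_contra! hk'
  exact ((h v).2 hk').not_gt hk

theorem le_card_of_forall_adj_lt_mem (h : IsGreedyColoring G c) {v : V} {N : Finset V}
    (hN : ∀ u, G.Adj v u → u < v → u ∈ N) : c v ≤ #N := by
  have hrange : range (c v) ⊆ N.image c := fun k hk ↦ by
    obtain ⟨u, huv, hu, rfl⟩ := h.exists_adj_lt (mem_range.1 hk)
    exact mem_image_of_mem c (hN u huv hu)
  simpa using (card_le_card hrange).trans card_image_le

theorem image_univ_eq_range [Fintype V] (h : IsGreedyColoring G c) {v : V}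
    (hv : ∀ w, c w ≤ c v) : univ.image c = range (c v + 1) := by
  refine Subset.antisymm (fun k hk ↦ ?_) (fun k hk ↦ ?_)
  · obtain ⟨w, -, rfl⟩ := mem_image.1 hk
    exact mem_range_succ_iff.2 (hv w)
  · rcases (mem_range_succ_iff.1 hk).lt_or_eq with hk | rfl
    · obtain ⟨u, -, -, rfl⟩ := h.exists_adj_lt hk
      exact mem_image_of_mem c (mem_univ u)
    · exact mem_image_of_mem c (mem_univ v)

theorem exists_isCliquePacking [Fintype V] [DecidableEq V] (h : IsGreedyColoring G c) (v : V) :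
    ∃ P : Finset (Finset V), G.IsCliquePacking P ∧ (∀ w ∈ P.biUnion id, w ≤ v) ∧
      #(P.biUnion id) = c v + #P := by
  induction hcv : c v generalizing v with
  | zero => exact ⟨∅, ⟨by simp, by simp, by simp⟩, by simp, by simp⟩
  | succ m ih =>
    obtain ⟨u, -, hu, hcu⟩ := h.exists_adj_lt (show m < c v by omega)
    obtain ⟨P, hP, hPu, hU⟩ := ih u hcu
    classical
    let N := univ.filter fun y ↦ G.Adj v y ∧ y < v
    have hN : c v ≤ #N :=
      h.le_card_of_forall_adj_lt_mem fun y hvy hy ↦ mem_filter.2 ⟨mem_univ y, hvy, hy⟩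
    have hv : v ∉ P.biUnion id := fun hv ↦ (hPu v hv).not_gt hu
    have hNadj : ∀ y ∈ N, G.Adj v y := fun y hy ↦ (mem_filter.1 hy).2.1
    obtain ⟨P', hP', hsub, hU'⟩ := hP.exists_extend_of_lt_card hU hv hNadj (by omega)
    refine ⟨P', hP', fun w hw ↦ ?_, hU'⟩
    rcases mem_insert.1 (hsub hw) with rfl | hw
    · exact le_rfl
    rcases mem_union.1 hw with hw | hw
    · exact (hPu w hw).trans hu.le
    · exact (mem_filter.1 hw).2.2.le

end IsGreedyColoring

/-- Structural theorem about FirstFit: if greedy uses exactly `x ≥ 2` colors, then there is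
`q` with `0 ≤ q ≤ x - 2` and a family of `q + 1` pairwise disjoint vertex subsets, each of
size at least 2 inducing a clique, whose union has cardinality `x + q`. -/
theorem firstFit_structural {V : Type*} [Fintype V] [DecidableEq V] [LinearOrder V]
    (G : SimpleGraph V) (c : V → ℕ) (h : IsGreedyColoring G c)
    (x : ℕ) (hx : 2 ≤ x) (hcolors : (Finset.univ.image c).card = x) :
    ∃ q : ℕ, q ≤ x - 2 ∧ ∃ P : Finset (Finset V),
      P.card = q + 1 ∧
      ((P : Set (Finset V)).Pairwise fun K K' => Disjoint K K') ∧
      (∀ K ∈ P, 2 ≤ K.card ∧ G.IsClique (K : Set V)) ∧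
      (P.biUnion id).card = x + q := by
  have : Nonempty V :=
    univ_nonempty_iff.1 (image_nonempty.1 (card_pos.1 (by omega : 0 < #(univ.image c))))
  obtain ⟨v, hv⟩ := Finite.exists_max c
  have hcv : c v + 1 = x := by rw [← hcolors, h.image_univ_eq_range hv, card_range]
  obtain ⟨P, hP, -, hU⟩ := h.exists_isCliquePacking v
  have hPne : P.Nonempty := nonempty_iff_ne_empty.2 fun hP ↦ by simp [hP] at hU; omega
  have := hP.two_mul_card_le
  have := hPne.card_pos
  exact ⟨#P - 1, by omega, P, by omega, hP.pairwiseDisjoint,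
    fun K hK ↦ ⟨hP.two_le_card K hK, hP.isClique K hK⟩, by omega⟩
end

section
/- Let G be a finite simple graph with a linear order π and a prediction P : V(G) → ℕ. Fix a value i, let G_i be the subgraph of G induced by {v : P(v) = i}, and let x_i be the number of colors used by the greedy coloring of G_i under the order induced by π. Let O be any proper coloring of G and let η_i = |{v ∈ V(G_i) : O(v) ≠ P(v)}|. Then x_i ≤ η_i + 1. -/
namespace IsGreedyColoring

variable {V : Type*} [LinearOrder V] {G : SimpleGraph V} {c : V → ℕ}

theorem exists_adj_lt_of_lt (hc : IsGreedyColoring G c) {v : V} {k : ℕ} (hk : k < c v) :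
    ∃ u, G.Adj v u ∧ u < v ∧ c u = k := by
  by_contra! h
  exact ((hc v).2 h).not_gt hk

theorem subsingleton_range_diff_image_compl (hc : IsGreedyColoring G c) {S : Set V}
    (hS : G.IsIndepSet S) : (Set.range c \ c '' Sᶜ).Subsingleton := by
  have no_lt : ∀ k ∈ Set.range c \ c '' Sᶜ, ∀ j ∈ Set.range c \ c '' Sᶜ, ¬ k < j := by
    rintro k ⟨-, hkS⟩ j ⟨⟨v, rfl⟩, hvS⟩ hkj
    obtain ⟨u, huv, -, rfl⟩ := hc.exists_adj_lt_of_lt hkj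
    have hv : v ∈ S := by_contra fun hv => hvS ⟨v, hv, rfl⟩
    have hu : u ∈ S := by_contra fun hu => hkS ⟨u, hu, rfl⟩
    exact hS hv hu huv.ne huv
  intro k hk j hj
  exact le_antisymm (not_lt.1 (no_lt j hj k hk)) (not_lt.1 (no_lt k hk j hj))

theorem ncard_range_le_ncard_compl_add_one [Finite V] (hc : IsGreedyColoring G c) {S : Set V}
    (hS : G.IsIndepSet S) : (Set.range c).ncard ≤ Sᶜ.ncard + 1 :=
  calc (Set.range c).ncard
      ≤ (c '' Sᶜ ∪ (Set.range c \ c '' Sᶜ)).ncard :=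
        Set.ncard_le_ncard (Set.union_sdiff_self.symm ▸ Set.subset_union_right)
    _ ≤ (c '' Sᶜ).ncard + (Set.range c \ c '' Sᶜ).ncard := Set.ncard_union_le _ _
    _ ≤ Sᶜ.ncard + 1 :=
        add_le_add Set.ncard_image_le
          ((Set.ncard_le_one).2 (hc.subsingleton_range_diff_image_compl hS))

end IsGreedyColoring

/-- Within a single prediction class, the number of colors used by greedy on the induced
subgraph is at most the number of prediction errors in the class plus 1. -/
theorem palette_colors_le_errors_succ {V : Type*} [Fintype V] [LinearOrder V]
    (G : SimpleGraph V) (P O : V → ℕ) (hO : ∀ u v : V, G.Adj u v → O u ≠ O v)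
    (i : ℕ) (c : {v : V | P v = i} → ℕ)
    (hc : IsGreedyColoring (G.induce {v : V | P v = i}) c) :
    (Set.range c).ncard ≤ {v : V | P v = i ∧ O v ≠ P v}.ncard + 1 := by
  set S : Set {v : V | P v = i} := {v | O v = i}
  have hS : (G.induce {v : V | P v = i}).IsIndepSet S := fun u hu v hv _ huv =>
    hO u v huv (hu.trans hv.symm)
  have errors : Subtype.val '' Sᶜ = {v : V | P v = i ∧ O v ≠ P v} := by
    ext v
    constructor
    · rintro ⟨⟨v, hv⟩, hvS, rfl⟩
      exact ⟨hv, fun h => hvS (h.trans hv)⟩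
    · rintro ⟨hv, hvO⟩
      exact ⟨⟨v, hv⟩, fun h => hvO (h.trans hv.symm), rfl⟩
  rw [← errors, Set.ncard_image_of_injective _ Subtype.val_injective]
  exact hc.ncard_range_le_ncard_compl_add_one hS
end

section
/- For every integer k ≥ 2 there exists a finite simple graph G with χ(G) = k, a linear order π on V(G), and a prediction P : V(G) → ℕ, such that the prediction error is η(G) = k(k−1) and FirstFitPredictions uses exactly k² = η(G) + k distinct colors on (G, π, P). -/
open Finset

theorem isGreedyColoring_top {W : Type*} [LinearOrder W] {c : W → ℕ} (hc : StrictMono c)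
    (hdown : ∀ v, ∀ n < c v, n ∈ Set.range c) : IsGreedyColoring ⊤ c := by
  refine fun v ↦ ⟨fun u _ huv ↦ (hc huv).ne, fun n hn ↦ not_lt.1 fun hlt ↦ ?_⟩
  obtain ⟨u, rfl⟩ := hdown v n hlt
  have huv : u < v := hc.lt_iff_lt.1 hlt
  exact hn u ((SimpleGraph.top_adj _ _).2 huv.ne') huv rfl

theorem ncard_setOf_eq_le_ncard_range {V ι : Type*} [Finite V] {P O : V → ι}
    (hO : ∀ u v, P u = P v → O u = O v → u = v) :
    {v | P v = O v}.ncard ≤ (Set.range P).ncard :=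
  Set.ncard_le_ncard_of_injOn P (fun v _ ↦ ⟨v, rfl⟩)
    fun u hu v hv h ↦ hO u v h (hu.symm.trans (h.trans hv))

theorem card_sub_ncard_range_le_ncard_setOf_ne {V ι : Type*} [Finite V] {P O : V → ι}
    (hO : ∀ u v, P u = P v → O u = O v → u = v) :
    Nat.card V - (Set.range P).ncard ≤ {v | P v ≠ O v}.ncard := by
  rw [← Set.compl_ofPred, Set.ncard_compl]
  have := ncard_setOf_eq_le_ncard_range hO
  omega

namespace CliqueCopies

variable {k : ℕ}

def row (v : Fin k ×ₗ Fin k) : ℕ := (ofLex v).1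

def col (v : Fin k ×ₗ Fin k) : ℕ := (ofLex v).2

def graph (k : ℕ) : SimpleGraph (Fin k ×ₗ Fin k) where
  Adj u v := u ≠ v ∧ row u = row v
  symm := ⟨fun _ _ h ↦ ⟨h.1.symm, h.2.symm⟩⟩
  loopless := ⟨fun _ h ↦ h.1 rfl⟩

theorem graph_adj {u v : Fin k ×ₗ Fin k} : (graph k).Adj u v ↔ u ≠ v ∧ row u = row v :=
  Iff.rfl

theorem eq_of_row_eq_of_col_eq {u v : Fin k ×ₗ Fin k} (hr : row u = row v) (hc : col u = col v) :
    u = v :=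
  ofLex_inj.1 (Prod.ext (Fin.ext hr) (Fin.ext hc))

theorem col_ne_of_adj {u v : Fin k ×ₗ Fin k} (h : (graph k).Adj u v) : col u ≠ col v :=
  fun hc ↦ h.1 (eq_of_row_eq_of_col_eq h.2 hc)

theorem range_row : Set.range (row (k := k)) = Set.Iio k := by
  refine Set.Subset.antisymm (Set.range_subset_iff.2 fun v ↦ (ofLex v).1.isLt) fun n hn ↦ ?_
  exact ⟨toLex (⟨n, hn⟩, ⟨n, hn⟩), rfl⟩

theorem range_col : Set.range (col (k := k)) = Set.Iio k := by
  refine Set.Subset.antisymm (Set.range_subset_iff.2 fun v ↦ (ofLex v).2.isLt) fun n hn ↦ ?_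
  exact ⟨toLex (⟨n, hn⟩, ⟨n, hn⟩), rfl⟩

theorem range_col_restrict_row {i : ℕ} (hi : i < k) :
    Set.range (fun v : {v : Fin k ×ₗ Fin k | row v = i} ↦ col v.1) = Set.Iio k := by
  refine Set.Subset.antisymm (Set.range_subset_iff.2 fun v ↦ (ofLex v.1).2.isLt) fun n hn ↦ ?_
  exact ⟨⟨toLex (⟨i, hi⟩, ⟨n, hn⟩), rfl⟩, rfl⟩

theorem ncard_diagonal : {v : Fin k ×ₗ Fin k | row v = col v}.ncard = k := by
  have : {v : Fin k ×ₗ Fin k | row v = col v} = Set.range fun j : Fin k ↦ toLex (j, j) := by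
    ext v
    refine ⟨fun h ↦ ⟨(ofLex v).1, eq_of_row_eq_of_col_eq rfl h⟩, ?_⟩
    rintro ⟨j, rfl⟩
    rfl
  rw [this, Set.ncard_range_of_injective fun a b h ↦ congrArg Prod.fst (toLex_inj.1 h),
    Nat.card_eq_fintype_card, Fintype.card_fin]

theorem nat_card_vertex : Nat.card (Fin k ×ₗ Fin k) = k * k := by
  simp [Nat.card_eq_fintype_card, Fintype.card_lex]

theorem chromaticNumber_graph : (graph k).chromaticNumber = k := by
  refine le_antisymm ?_ ?_
  · exact SimpleGraph.Colorable.chromaticNumber_le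
      ⟨SimpleGraph.Coloring.mk (fun v ↦ (ofLex v).2)
        fun h heq ↦ col_ne_of_adj h (congrArg Fin.val heq)⟩
  · -- the first row is a copy of `K_k`; `j.pos` names it without assuming `0 < k`
    let f : (⊤ : SimpleGraph (Fin k)) →g graph k :=
      ⟨fun j ↦ toLex (⟨0, j.pos⟩, j), fun h ↦ ⟨fun he ↦ h (congrArg Prod.snd (toLex_inj.1 he)), rfl⟩⟩
    simpa [SimpleGraph.chromaticNumber_top] using SimpleGraph.chromaticNumber_mono_of_hom f

theorem induce_row_eq_top (i : ℕ) : (graph k).induce {v : Fin k ×ₗ Fin k | row v = i} = ⊤ := by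
  ext u v
  simp only [SimpleGraph.comap_adj, SimpleGraph.top_adj, graph_adj, Function.Embedding.subtype_apply,
    ne_eq, Subtype.ext_iff]
  exact and_iff_left (u.2.trans v.2.symm)

theorem isGreedyColoring_col (i : ℕ) :
    IsGreedyColoring ((graph k).induce {v : Fin k ×ₗ Fin k | row v = i}) (fun v ↦ col v.1) := by
  rw [induce_row_eq_top]
  refine isGreedyColoring_top (fun u v huv ↦ ?_) fun v n hn ↦ ?_
  · have hrow : (ofLex u.1).1 = (ofLex v.1).1 := Fin.ext (u.2.trans v.2.symm)
    rcases Prod.Lex.lt_iff.1 huv with h | h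
    · exact absurd hrow h.ne
    · exact h.2
  · have hn' : n < k := hn.trans (ofLex v.1).2.isLt
    exact ⟨⟨toLex ((ofLex v.1).1, ⟨n, hn'⟩), v.2⟩, rfl⟩

theorem isLeast_prediction_error :
    IsLeast {n : ℕ | ∃ O : Fin k ×ₗ Fin k → ℕ, (∀ u v, (graph k).Adj u v → O u ≠ O v) ∧
      (Set.range O).ncard = k ∧ n = {v | row v ≠ O v}.ncard} (k * (k - 1)) := by
  refine ⟨⟨col, fun u v ↦ col_ne_of_adj, by simp [range_col], ?_⟩, ?_⟩
  · rw [← Set.compl_ofPred, Set.ncard_compl, ncard_diagonal, nat_card_vertex, Nat.mul_sub_one]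
  · rintro n ⟨O, hO, -, rfl⟩
    have := card_sub_ncard_range_le_ncard_setOf_ne (P := row) (O := O)
      fun u v hr hc ↦ by_contra fun huv ↦ hO u v ⟨huv, hr⟩ hc
    rwa [nat_card_vertex, range_row, Set.ncard_Iio_nat, ← Nat.mul_sub_one] at this

theorem sum_ncard_range_col :
    ∑ i ∈ univ.image (row (k := k)), (Set.range fun v : {v : Fin k ×ₗ Fin k | row v = i} ↦ col v.1).ncard
      = k * k := by
  have himage : univ.image (row (k := k)) = range k :=
    coe_injective (by simp [range_row])
  rw [himage, sum_congr rfl fun i hi ↦ by rw [range_col_restrict_row (mem_range.1 hi),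
    Set.ncard_Iio_nat], sum_const, card_range, smul_eq_mul]

end CliqueCopies

open CliqueCopies in
theorem ffp_lower_bound_general (k : ℕ) :
    ∃ (V : Type) (_ : Fintype V) (_ : DecidableEq V) (_ : LinearOrder V)
      (G : SimpleGraph V) (P : V → ℕ)
      (c : (i : ℕ) → ({v : V | P v = i} → ℕ)),
      G.chromaticNumber = (k : ℕ∞) ∧
      (∀ i : ℕ, IsGreedyColoring (G.induce {v : V | P v = i}) (c i)) ∧
      IsLeast {n : ℕ | ∃ O : V → ℕ, (∀ u v : V, G.Adj u v → O u ≠ O v) ∧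
        (Set.range O).ncard = k ∧ n = {v : V | P v ≠ O v}.ncard} (k * (k - 1)) ∧
      (∑ i ∈ Finset.univ.image P, (Set.range (c i)).ncard) = k * k :=
  ⟨Fin k ×ₗ Fin k, inferInstance, inferInstance, inferInstance, graph k, row,
    fun _ v ↦ col v.1, chromaticNumber_graph, isGreedyColoring_col, isLeast_prediction_error,
    sum_ncard_range_col⟩

/-- Lower bound for FirstFitPredictions: for every `k ≥ 2` there is an instance with
chromatic number `k`, prediction error `η = k(k−1)`, on which FirstFitPredictions uses
exactly `k² = η + k` colors. -/
theorem ffp_lower_bound (k : ℕ) (hk : 2 ≤ k) :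
    ∃ (V : Type) (_ : Fintype V) (_ : DecidableEq V) (_ : LinearOrder V)
      (G : SimpleGraph V) (P : V → ℕ)
      (c : (i : ℕ) → ({v : V | P v = i} → ℕ)),
      G.chromaticNumber = (k : ℕ∞) ∧
      (∀ i : ℕ, IsGreedyColoring (G.induce {v : V | P v = i}) (c i)) ∧
      IsLeast {n : ℕ | ∃ O : V → ℕ, (∀ u v : V, G.Adj u v → O u ≠ O v) ∧
        (Set.range O).ncard = k ∧ n = {v : V | P v ≠ O v}.ncard} (k * (k - 1)) ∧
      (∑ i ∈ Finset.univ.image P, (Set.range (c i)).ncard) = k * k :=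
  ffp_lower_bound_general k
end

section
/- The greedy coloring is not weakly monotone: for every constant c > 0 there exist n, a finite simple graph G with a linear order π on V(G), and a suffix of π inducing a subgraph G' with induced order π', such that the number of colors used by the greedy coloring on (G', π') exceeds c times the number of colors used by the greedy coloring on (G, π). -/
theorem isGreedyColoring_iff {V : Type*} [LinearOrder V] {G : SimpleGraph V} {c : V → ℕ} :
    IsGreedyColoring G c ↔
      (∀ u v, G.Adj v u → u < v → c u ≠ c v) ∧
        ∀ v, ∀ m < c v, ∃ u, G.Adj v u ∧ u < v ∧ c u = m := by
  simp only [IsGreedyColoring, IsLeast, lowerBounds, Set.mem_ofPred_eq, forall_and]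
  refine and_congr forall_comm (forall_congr' fun v => ⟨fun h m hm => ?_, fun h m hm => ?_⟩)
  · by_contra! hne
    exact (h hne).not_gt hm
  · by_contra! hlt
    obtain ⟨u, hadj, huv, rfl⟩ := h m hlt
    exact hm u hadj huv rfl

/-- The vertex `toLex (i, false)` is `x_{i+1}` and `toLex (i, true)` is `y_{i+1}`, so the
lexicographic order is `x₁ < y₁ < x₂ < y₂ < ⋯`. -/
def crownPlusEdge (n : ℕ) : SimpleGraph (Fin n ×ₗ Bool) where
  Adj u v := (ofLex u).2 ≠ (ofLex v).2 ∧ ((ofLex u).1 = (ofLex v).1 → (ofLex u).1.val = 0)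
  symm := ⟨fun u v => by grind⟩
  loopless := ⟨fun u => by simp⟩

namespace crownPlusEdge

variable {n : ℕ}

theorem adj_toLex {i j : Fin n} {a b : Bool} :
    (crownPlusEdge n).Adj (toLex (i, a)) (toLex (j, b)) ↔ a ≠ b ∧ (i = j → i.val = 0) := Iff.rfl

def afterFirstPair (n : ℕ) : Set (Fin n ×ₗ Bool) := {v | 0 < (ofLex v).1.val}

theorem mem_afterFirstPair {v : Fin n ×ₗ Bool} : v ∈ afterFirstPair n ↔ 0 < (ofLex v).1.val :=
  Iff.rfl

theorem isUpperSet_afterFirstPair : IsUpperSet (afterFirstPair n) := fun u v huv hu =>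
  mem_afterFirstPair.2 <| (mem_afterFirstPair.1 hu).trans_le (Prod.Lex.monotone_fst u v huv)

theorem isGreedyColoring_side :
    IsGreedyColoring (crownPlusEdge n) fun v => (ofLex v).2.toNat := by
  refine isGreedyColoring_iff.2 ⟨fun u v huv _ hc => huv.1 ?_, ?_⟩
  · revert hc; cases (ofLex u).2 <;> cases (ofLex v).2 <;> simp
  simp only [toLex.surjective.forall, ofLex_toLex]
  rintro ⟨i, b⟩ m hm
  obtain ⟨rfl, rfl⟩ : b = true ∧ m = 0 := by cases b <;> simp_all
  refine ⟨toLex (⟨0, i.pos⟩, false), adj_toLex.2 ⟨nofun, fun h => by rw [h]⟩,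
    Prod.Lex.toLex_lt_toLex.2 ?_, rfl⟩
  rcases Nat.eq_zero_or_pos i.val with hi | hi
  · exact Or.inr ⟨Fin.ext hi.symm, Bool.false_lt_true⟩
  · exact Or.inl hi

theorem isGreedyColoring_induce_afterFirstPair :
    IsGreedyColoring ((crownPlusEdge n).induce (afterFirstPair n))
      fun v => (ofLex v.1).1.val - 1 := by
  refine isGreedyColoring_iff.2 ⟨?_, ?_⟩
  · rintro ⟨u, hu⟩ ⟨v, hv⟩ ⟨-, huv⟩ - hc
    rw [mem_afterFirstPair] at hu hv
    replace hc : (ofLex u).1.val - 1 = (ofLex v).1.val - 1 := hc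
    exact hv.ne' (huv (Fin.ext (show (ofLex v).1.val = (ofLex u).1.val by omega)))
  · rintro ⟨v, hv⟩ m hm
    obtain ⟨⟨i, b⟩, rfl⟩ := toLex.surjective v
    simp only [mem_afterFirstPair, ofLex_toLex] at hv hm
    refine ⟨⟨toLex (⟨m + 1, by omega⟩, !b), Nat.succ_pos m⟩,
      adj_toLex.2 ⟨by simp, fun h => absurd (congrArg Fin.val h) (by omega : i.val ≠ m + 1)⟩,
      Prod.Lex.toLex_lt_toLex.2 (Or.inl (show m + 1 < i.val by omega)), Nat.add_sub_cancel m 1⟩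

theorem ncard_range_side_le_two :
    (Set.range fun v : Fin n ×ₗ Bool => (ofLex v).2.toNat).ncard ≤ 2 := by
  calc _ ≤ ({0, 1} : Set ℕ).ncard := Set.ncard_le_ncard <| by
          rintro _ ⟨v, rfl⟩; cases (ofLex v).2 <;> simp
    _ = 2 := Set.ncard_pair zero_ne_one

theorem sub_one_le_ncard_range_afterFirstPair :
    n - 1 ≤ (Set.range fun v : afterFirstPair n => (ofLex v.1).1.val - 1).ncard := by
  calc n - 1 = (Set.Iio (n - 1)).ncard := (Set.ncard_Iio_nat _).symm
    _ ≤ _ := Set.ncard_le_ncard fun m (hm : m < n - 1) => Set.mem_range.2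
      ⟨⟨toLex (⟨m + 1, by omega⟩, false), Nat.succ_pos m⟩, Nat.add_sub_cancel m 1⟩

end crownPlusEdge

open crownPlusEdge in
theorem firstFit_not_weakly_monotone_general (C : ℕ) :
    ∃ (V : Type) (_ : Fintype V) (_ : LinearOrder V) (G : SimpleGraph V) (s : Set V),
      (∀ u v : V, u ∈ s → u ≤ v → v ∈ s) ∧
      ∃ (c₁ : V → ℕ) (c₂ : {v : V // v ∈ s} → ℕ),
        IsGreedyColoring G c₁ ∧ IsGreedyColoring (G.induce s) c₂ ∧
        C * (Set.range c₁).ncard < (Set.range c₂).ncard := by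
  refine ⟨Fin (2 * C + 2) ×ₗ Bool, inferInstance, inferInstance, crownPlusEdge _,
    afterFirstPair _, fun _ _ hu huv => isUpperSet_afterFirstPair huv hu, _, _,
    isGreedyColoring_side, isGreedyColoring_induce_afterFirstPair, ?_⟩
  calc C * _ ≤ C * 2 := Nat.mul_le_mul_left C ncard_range_side_le_two
    _ < 2 * C + 2 - 1 := by omega
    _ ≤ _ := sub_one_le_ncard_range_afterFirstPair

/-- Greedy (FirstFit) is not weakly monotone: for every constant `C > 0` there is a finite
linearly ordered graph `G` and a suffix `s` of the order (an upward-closed set of vertices)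
such that greedy on the induced suffix subgraph uses more than `C` times as many colors as
greedy on the whole graph. -/
theorem firstFit_not_weakly_monotone (C : ℕ) (hC : 0 < C) :
    ∃ (V : Type) (_ : Fintype V) (_ : LinearOrder V) (G : SimpleGraph V) (s : Set V),
      (∀ u v : V, u ∈ s → u ≤ v → v ∈ s) ∧
      ∃ (c₁ : V → ℕ) (c₂ : {v : V // v ∈ s} → ℕ),
        IsGreedyColoring G c₁ ∧ IsGreedyColoring (G.induce s) c₂ ∧
        C * (Set.range c₁).ncard < (Set.range c₂).ncard :=
  firstFit_not_weakly_monotone_general C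
end

section
/- Let G be a finite simple bipartite graph with bipartition V(G) = V_1 ∪ V_2, and let G' be obtained from G by adding two new vertices v and v', with v adjacent to v' and to every vertex of V_1, and v' adjacent to every vertex of V_2. Then G' is bipartite, and if G contains no induced path on 6 vertices, then G' contains no induced path on 6 vertices. -/
/-!
Colour `V₁` and `v'` with one colour and `V₂` and `v` with the other. For P₆-freeness, note that
every edge of `G'` meets the closed neighbourhood of `v`, and likewise of `v'`, since an edge of
`G` has one end in `V₁` and one in `V₂`. In an induced path on six vertices, however, every vertex
is far from some edge of the path, so an induced P₆ of `G'` avoids `v` and `v'` and lies in `G`.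
-/

/-- `G` has no induced path on 6 vertices. -/
def P6Free {V : Type*} (G : SimpleGraph V) : Prop :=
  ¬ ∃ f : Fin 6 → V, Function.Injective f ∧
      ∀ i j : Fin 6, G.Adj (f i) (f j) ↔ (i.val + 1 = j.val ∨ j.val + 1 = i.val)

/-- The graph `G'` obtained from `G` by adding a vertex `v = Sum.inr false` adjacent to all
of `V₁`, a vertex `v' = Sum.inr true` adjacent to all of `V₂`, and the edge `vv'`. -/
def augmented {V : Type*} (G : SimpleGraph V) (V₁ V₂ : Set V) :
    SimpleGraph (V ⊕ Bool) :=
  SimpleGraph.fromRel fun x y =>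
    (∃ a b : V, x = Sum.inl a ∧ y = Sum.inl b ∧ G.Adj a b) ∨
    (∃ a : V, x = Sum.inr false ∧ y = Sum.inl a ∧ a ∈ V₁) ∨
    (∃ a : V, x = Sum.inr true ∧ y = Sum.inl a ∧ a ∈ V₂) ∨
    (x = Sum.inr false ∧ y = Sum.inr true)

open SimpleGraph

theorem p6Free_iff_isEmpty_embedding {V : Type*} {G : SimpleGraph V} :
    P6Free G ↔ IsEmpty (pathGraph 6 ↪g G) := by
  rw [P6Free, ← not_nonempty_iff, not_iff_not]
  constructor
  · rintro ⟨f, hinj, hadj⟩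
    exact ⟨⟨⟨f, hinj⟩, by simp [hadj, pathGraph_adj]⟩⟩
  · rintro ⟨e⟩
    exact ⟨e, e.injective, fun i j => by rw [e.map_adj_iff, pathGraph_adj]⟩

theorem SimpleGraph.Embedding.nonempty_of_range_subset {U V W : Type*} {F : SimpleGraph U}
    {G : SimpleGraph V} {H : SimpleGraph W} (φ : G ↪g H) (e : F ↪g H)
    (h : Set.range e ⊆ Set.range φ) : Nonempty (F ↪g G) := by
  choose g hg using fun x => h ⟨x, rfl⟩
  refine ⟨⟨⟨g, fun x y hxy => e.injective ?_⟩, ?_⟩⟩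
  · rw [← hg, ← hg, hxy]
  · intro x y
    change G.Adj (g x) (g y) ↔ F.Adj x y
    rw [← φ.map_adj_iff, hg, hg, e.map_adj_iff]

theorem pathGraph_embedding_apply_ne {W : Type*} {H : SimpleGraph W} {n : ℕ} (hn : 6 ≤ n)
    (e : pathGraph n ↪g H) {w : W}
    (hw : ∀ x y, H.Adj x y → x = w ∨ y = w ∨ H.Adj w x ∨ H.Adj w y) (i : Fin n) : e i ≠ w := by
  rintro rfl
  obtain ⟨j, k, hjk, hfar⟩ : ∃ j k : Fin n, j.val + 1 = k.val ∧
      (i.val + 1 < j.val ∨ k.val + 1 < i.val) := by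
    by_cases hi : 3 ≤ i.val
    · exact ⟨⟨i - 3, by omega⟩, ⟨i - 2, by omega⟩, by simp; omega, by simp; omega⟩
    · exact ⟨⟨i + 2, by omega⟩, ⟨i + 3, by omega⟩, rfl, by simp⟩
  have hadj : H.Adj (e j) (e k) := e.map_adj_iff.2 (pathGraph_adj.2 (Or.inl hjk))
  rcases hw _ _ hadj with h | h | h | h
  · have := congrArg Fin.val (e.injective h); omega
  · have := congrArg Fin.val (e.injective h); omega
  · have := pathGraph_adj.1 (e.map_adj_iff.1 h); omega
  · have := pathGraph_adj.1 (e.map_adj_iff.1 h); omega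

namespace augmented

variable {V : Type*} {G : SimpleGraph V} {V₁ V₂ : Set V}

@[simp]
theorem adj_inl_inl {a b : V} : (augmented G V₁ V₂).Adj (.inl a) (.inl b) ↔ G.Adj a b := by
  simpa [augmented, G.adj_comm b a] using G.ne_of_adj

@[simp]
theorem adj_inr_false_inl {a : V} : (augmented G V₁ V₂).Adj (.inr false) (.inl a) ↔ a ∈ V₁ := by
  simp [augmented]

@[simp]
theorem adj_inr_true_inl {a : V} : (augmented G V₁ V₂).Adj (.inr true) (.inl a) ↔ a ∈ V₂ := by
  simp [augmented]

@[simp]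
theorem adj_inl_inr {a : V} {b : Bool} :
    (augmented G V₁ V₂).Adj (.inl a) (.inr b) ↔ (augmented G V₁ V₂).Adj (.inr b) (.inl a) :=
  adj_comm _ _ _

@[simp]
theorem adj_inr_inr {b b' : Bool} : (augmented G V₁ V₂).Adj (.inr b) (.inr b') ↔ b ≠ b' := by
  cases b <;> cases b' <;> simp [augmented]

theorem colorable_two (hdisj : ∀ v : V, ¬(v ∈ V₁ ∧ v ∈ V₂))
    (hbip : ∀ a b : V, G.Adj a b → (a ∈ V₁ ∧ b ∈ V₂) ∨ (a ∈ V₂ ∧ b ∈ V₁)) :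
    (augmented G V₁ V₂).Colorable 2 := by
  classical
  refine (Coloring.mk (Sum.elim (fun a => decide (a ∈ V₁)) id) ?_).colorable
  have hV₂ : ∀ a ∈ V₂, a ∉ V₁ := fun a h₂ h₁ => hdisj a ⟨h₁, h₂⟩
  rintro (a | _ | _) (a' | _ | _) h
  · rcases hbip a a' (adj_inl_inl.1 h) with ⟨h₁, h₂⟩ | ⟨h₁, h₂⟩ <;> simp [h₁, h₂, hV₂]
  all_goals simp_all

theorem eq_inr_or_adj_inr_of_adj
    (hbip : ∀ a b : V, G.Adj a b → (a ∈ V₁ ∧ b ∈ V₂) ∨ (a ∈ V₂ ∧ b ∈ V₁))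
    (b : Bool) (x y : V ⊕ Bool) (h : (augmented G V₁ V₂).Adj x y) :
    x = .inr b ∨ y = .inr b ∨ (augmented G V₁ V₂).Adj (.inr b) x ∨
      (augmented G V₁ V₂).Adj (.inr b) y := by
  rcases x with a | _ | _ <;> rcases y with a' | _ | _
  · rcases hbip a a' (adj_inl_inl.1 h) with ⟨h₁, h₂⟩ | ⟨h₁, h₂⟩ <;> cases b <;> simp [h₁, h₂]
  all_goals cases b <;> simp_all

def inlEmbedding : G ↪g augmented G V₁ V₂ :=
  ⟨Function.Embedding.inl, adj_inl_inl⟩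

theorem range_subset_range_inlEmbedding
    (hbip : ∀ a b : V, G.Adj a b → (a ∈ V₁ ∧ b ∈ V₂) ∨ (a ∈ V₂ ∧ b ∈ V₁))
    {n : ℕ} (hn : 6 ≤ n) (e : pathGraph n ↪g augmented G V₁ V₂) :
    Set.range e ⊆ Set.range (inlEmbedding : G ↪g augmented G V₁ V₂) := by
  rintro _ ⟨i, rfl⟩
  cases h : e i with
  | inl a => exact ⟨a, rfl⟩
  | inr b => exact absurd h (pathGraph_embedding_apply_ne hn e (eq_inr_or_adj_inr_of_adj hbip b) i)

end augmented

theorem augmented_bipartite_and_P6Free_general {V : Type*}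
    (G : SimpleGraph V) (V₁ V₂ : Set V)
    (hdisj : ∀ v : V, ¬(v ∈ V₁ ∧ v ∈ V₂))
    (hbip : ∀ a b : V, G.Adj a b → (a ∈ V₁ ∧ b ∈ V₂) ∨ (a ∈ V₂ ∧ b ∈ V₁)) :
    (augmented G V₁ V₂).Colorable 2 ∧ (P6Free G → P6Free (augmented G V₁ V₂)) := by
  refine ⟨augmented.colorable_two hdisj hbip, fun hG => ?_⟩
  rw [p6Free_iff_isEmpty_embedding] at hG ⊢
  refine ⟨fun e => ?_⟩
  obtain ⟨e'⟩ := augmented.inlEmbedding.nonempty_of_range_subset e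
    (augmented.range_subset_range_inlEmbedding hbip le_rfl e)
  exact hG.false e'

theorem augmented_bipartite_and_P6Free {V : Type*} [Fintype V]
    (G : SimpleGraph V) (V₁ V₂ : Set V)
    (hcover : ∀ v : V, v ∈ V₁ ∨ v ∈ V₂)
    (hdisj : ∀ v : V, ¬(v ∈ V₁ ∧ v ∈ V₂))
    (hbip : ∀ a b : V, G.Adj a b → (a ∈ V₁ ∧ b ∈ V₂) ∨ (a ∈ V₂ ∧ b ∈ V₁)) :
    (augmented G V₁ V₂).Colorable 2 ∧ (P6Free G → P6Free (augmented G V₁ V₂)) :=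
  augmented_bipartite_and_P6Free_general G V₁ V₂ hdisj hbip
end
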